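/- arXiv:2405.06881 — 2 statements merged into one kernel-verified Lean document; each statement's English description precedes it below -/
import Mathlib

section
/- Let r ≥ 1 and let φ : [0,1] → ℝ be a step function that is constant on each dyadic interval [i/2^r, (i+1)/2^r) for i = 0, …, 2^r − 1, and set X_k^φ(α) = φ(T^k α) on the probability space [0,1] with Lebesgue measure, where T is the angle-doubling map. Then for all indices i, j ≥ 0 with |i − j| ≥ r, the random variables X_i^φ and X_j^φ are independent. -/
open MeasureTheory ProbabilityTheory

/-- Lebesgue measure on `[0,1]`, the underlying probability space. -/
noncomputable def unifP : Measure ℝ := volume.restrict (Set.Icc (0 : ℝ) 1)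

/-- The angle-doubling map `T α = 2 α mod 1`. -/
noncomputable def angleDouble (α : ℝ) : ℝ := Int.fract (2 * α)

lemma countA (q c a : ℕ) (ha : a < q) :
    ((Finset.range (q * c)).filter (fun m => m % q = a)).card = c := by
  have hq : 0 < q := lt_of_le_of_lt (Nat.zero_le a) ha
  conv_rhs => rw [← Finset.card_range c]
  apply Finset.card_bij' (fun m _ => m / q) (fun t _ => q * t + a)
  · intro m hm
    simp only [Finset.mem_filter, Finset.mem_range] at hm ⊢
    rw [Nat.div_lt_iff_lt_mul hq, mul_comm]
    exact hm.1
  · intro t ht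
    simp only [Finset.mem_filter, Finset.mem_range] at ht ⊢
    refine ⟨?_, by simp [Nat.mul_add_mod, Nat.mod_eq_of_lt ha]⟩
    have h1 : q * (t + 1) ≤ q * c := Nat.mul_le_mul_left q ht
    have h2 : q * t + a < q * (t + 1) := by rw [Nat.mul_succ]; omega
    omega
  · intro m hm
    simp only [Finset.mem_filter, Finset.mem_range] at hm
    rw [← hm.2]
    exact Nat.div_add_mod m q
  · intro t ht
    simp [Nat.mul_add_div hq, Nat.div_eq_of_lt ha]

lemma countB (q d M a b : ℕ) (hd : 0 < d) (hqd : q ∣ d) :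
    ((Finset.range (d * M)).filter (fun n => n / d % q = a ∧ n % q = b)).card
      = ((Finset.range M).filter (fun m => m % q = a)).card *
        ((Finset.range d).filter (fun s => s % q = b)).card := by
  rw [← Finset.card_product]
  apply Finset.card_bij' (fun n _ => (n / d, n % d)) (fun p _ => d * p.1 + p.2)
  · intro n hn
    simp only [Finset.mem_filter, Finset.mem_range, Finset.mem_product] at hn ⊢
    refine ⟨⟨?_, hn.2.1⟩, Nat.mod_lt n hd, ?_⟩
    · rw [Nat.div_lt_iff_lt_mul hd, mul_comm]; exact hn.1
    · rw [Nat.mod_mod_of_dvd n hqd]; exact hn.2.2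
  · rintro ⟨m, s⟩ hp
    simp only [Finset.mem_filter, Finset.mem_range, Finset.mem_product] at hp ⊢
    obtain ⟨⟨hm, hma⟩, hs, hsb⟩ := hp
    have h1 : d * m + s < d * (m + 1) := by rw [Nat.mul_succ]; omega
    have h2 : d * (m + 1) ≤ d * M := Nat.mul_le_mul_left d hm
    refine ⟨by omega, ?_, ?_⟩
    · rw [Nat.mul_add_div hd, Nat.div_eq_of_lt hs, add_zero]; exact hma
    · obtain ⟨e, rfl⟩ := hqd
      rw [mul_assoc, Nat.mul_add_mod]
      exact hsb
  · intro n hn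
    exact Nat.div_add_mod n d
  · rintro ⟨m, s⟩ hp
    simp only [Finset.mem_filter, Finset.mem_range, Finset.mem_product] at hp
    obtain ⟨⟨hm, hma⟩, hs, hsb⟩ := hp
    simp [Nat.mul_add_div hd, Nat.div_eq_of_lt hs, Nat.mul_add_mod, Nat.mod_eq_of_lt hs]

lemma measB (K : ℕ) (P : ℤ → Prop) [DecidablePred P] :
    unifP {α : ℝ | P ⌊(2 ^ K : ℝ) * α⌋} =
      (((Finset.range (2 ^ K)).filter (fun m : ℕ => P (m : ℤ))).card : ENNReal) / (2 ^ K : ENNReal) := by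
  set N : ℕ := 2 ^ K with hNdef
  have hN : (0 : ℝ) < (N : ℝ) := by positivity
  rw [unifP, Measure.restrict_apply' measurableSet_Icc]
  have h1 : {α : ℝ | P ⌊(2 ^ K : ℝ) * α⌋} ∩ Set.Icc 0 1
      = ({α : ℝ | P ⌊(2 ^ K : ℝ) * α⌋} ∩ Set.Ico 0 1)
        ∪ ({α : ℝ | P ⌊(2 ^ K : ℝ) * α⌋} ∩ {1}) := by
    rw [← Set.inter_union_distrib_left, Set.Ico_union_right zero_le_one]
  have hub : volume ({α : ℝ | P ⌊(2 ^ K : ℝ) * α⌋} ∩ Set.Icc 0 1)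
      = volume ({α : ℝ | P ⌊(2 ^ K : ℝ) * α⌋} ∩ Set.Ico 0 1) := by
    apply le_antisymm
    · rw [h1]
      refine le_trans (measure_union_le _ _) ?_
      rw [measure_mono_null Set.inter_subset_right Real.volume_singleton, add_zero]
    · exact measure_mono (Set.inter_subset_inter_right _ Set.Ico_subset_Icc_self)
  rw [hub]
  have hNN : ((2:ℝ) ^ K) = (N : ℝ) := by push_cast [hNdef]; ring
  have h2 : {α : ℝ | P ⌊(2 ^ K : ℝ) * α⌋} ∩ Set.Ico 0 1
      = ⋃ m ∈ (Finset.range N).filter (fun m : ℕ => P (m : ℤ)),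
          Set.Ico ((m : ℝ) / N) (((m : ℝ) + 1) / N) := by
    ext α
    simp only [Set.mem_inter_iff, Set.mem_setOf_eq, Set.mem_Ico, Set.mem_iUnion,
      Finset.mem_filter, Finset.mem_range, exists_prop]
    rw [hNN]
    constructor
    · rintro ⟨hP, h0, h1'⟩
      have hnn : (0:ℝ) ≤ (N : ℝ) * α := by positivity
      have hf0 : 0 ≤ ⌊(N : ℝ) * α⌋ := Int.floor_nonneg.2 hnn
      have hfN : ⌊(N : ℝ) * α⌋ < (N : ℤ) := by
        apply Int.floor_lt.2
        push_cast
        nlinarith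
      refine ⟨⌊(N : ℝ) * α⌋.toNat, ⟨?_, ?_⟩, ?_, ?_⟩
      · omega
      · rwa [Int.toNat_of_nonneg hf0]
      · rw [div_le_iff₀ hN]
        have h : ((⌊(N : ℝ) * α⌋.toNat : ℤ) : ℝ) ≤ (N:ℝ) * α := by
          rw [Int.toNat_of_nonneg hf0]; exact Int.floor_le _
        push_cast at h ⊢
        linarith
      · rw [lt_div_iff₀ hN]
        have h : (N:ℝ) * α < ((⌊(N : ℝ) * α⌋.toNat : ℤ) : ℝ) + 1 := by
          rw [Int.toNat_of_nonneg hf0]; exact Int.lt_floor_add_one _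
        push_cast at h ⊢
        linarith
    · rintro ⟨m, ⟨hm, hPm⟩, hlo, hhi⟩
      have hmN : (m : ℝ) + 1 ≤ (N : ℝ) := by exact_mod_cast hm
      have h0 : (0:ℝ) ≤ α := le_trans (by positivity) hlo
      have h1'' : α < 1 := lt_of_lt_of_le hhi (by rw [div_le_one hN]; exact hmN)
      have hfl : ⌊(N : ℝ) * α⌋ = (m : ℤ) := by
        apply Int.floor_eq_iff.2
        constructor
        · rw [div_le_iff₀ hN] at hlo
          push_cast
          linarith
        · rw [lt_div_iff₀ hN] at hhi
          push_cast
          linarith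
      exact ⟨hfl ▸ hPm, h0, h1''⟩
  rw [h2]
  rw [measure_biUnion_finset ?hd (fun m _ => measurableSet_Ico)]
  case hd =>
    intro m hm m' hm' hne
    simp only [Function.onFun]
    rw [Set.Ico_disjoint_Ico]
    rcases Nat.lt_or_ge m m' with h | h
    · refine le_trans (min_le_left _ _) (le_trans ?_ (le_max_right _ _))
      gcongr
      exact_mod_cast h
    · have h' : m' < m := lt_of_le_of_ne h (Ne.symm ?_)
      · refine le_trans (min_le_right _ _) (le_trans ?_ (le_max_left _ _))
        gcongr
        exact_mod_cast h'
      · exact fun hc => hne (by exact_mod_cast hc)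
  have hvol : ∀ m ∈ (Finset.range N).filter (fun m : ℕ => P (m : ℤ)),
      volume (Set.Ico ((m : ℝ) / N) (((m : ℝ) + 1) / N)) = ENNReal.ofReal (1 / (N : ℝ)) := by
    intro m _
    rw [Real.volume_Ico]
    congr 1
    field_simp
    ring
  rw [Finset.sum_congr rfl hvol, Finset.sum_const, nsmul_eq_mul]
  rw [div_eq_mul_inv, one_mul, ENNReal.ofReal_inv_of_pos hN, ENNReal.ofReal_natCast,
    div_eq_mul_inv]
  congr 1
  push_cast [hNdef]
  norm_num

instance : IsProbabilityMeasure unifP := by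
  constructor
  rw [unifP, Measure.restrict_apply_univ, Real.volume_Icc]
  norm_num

lemma fl_div (i r t : ℕ) (α : ℝ) :
    ⌊(2 ^ (i + r) : ℝ) * α⌋ = ⌊(2 ^ (i + 2 * r + t) : ℝ) * α⌋ / (2 ^ (r + t) : ℤ) := by
  set m := ⌊(2 ^ (i + r) : ℝ) * α⌋ with hm
  set n := ⌊(2 ^ (i + 2 * r + t) : ℝ) * α⌋ with hn
  have hd : (0 : ℤ) < 2 ^ (r + t) := by positivity
  have hkey : (2 ^ (i + 2 * r + t) : ℝ) * α = (2 ^ (r + t) : ℝ) * ((2 ^ (i + r) : ℝ) * α) := by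
    rw [← mul_assoc, ← pow_add]
    congr 2
    omega
  have h1 : (2 ^ (r + t) : ℤ) * m ≤ n := by
    rw [hn]
    apply Int.le_floor.2
    push_cast
    rw [hkey]
    have := Int.floor_le ((2 ^ (i + r) : ℝ) * α)
    have h2 : (0:ℝ) < 2 ^ (r + t) := by positivity
    nlinarith
  have h2 : n < 2 ^ (r + t) * m + 2 ^ (r + t) := by
    have hfl : ((n : ℤ) : ℝ) ≤ (2 ^ (i + 2 * r + t) : ℝ) * α := Int.floor_le _
    have hup : (2 ^ (i + r) : ℝ) * α < (m : ℝ) + 1 := Int.lt_floor_add_one _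
    have h2' : (0:ℝ) < 2 ^ (r + t) := by positivity
    have : ((n : ℤ) : ℝ) < ((2 ^ (r + t) * m + 2 ^ (r + t) : ℤ) : ℝ) := by
      push_cast
      rw [hkey] at hfl
      nlinarith
    exact_mod_cast this
  have hsplit : n = (n - 2 ^ (r + t) * m) + 2 ^ (r + t) * m := by ring
  rw [hsplit, Int.add_mul_ediv_left _ m (ne_of_gt hd),
    Int.ediv_eq_zero_of_lt (by omega) (by omega), zero_add]

theorem step_indep_of_far
    (r : ℕ) (hr : 1 ≤ r) (φ : ℝ → ℝ)
    (hstep : ∀ i : ℕ, i < 2 ^ r →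
      ∀ x ∈ Set.Ico ((i : ℝ) / 2 ^ r) (((i : ℝ) + 1) / 2 ^ r), φ x = φ ((i : ℝ) / 2 ^ r))
    (X : ℕ → ℝ → ℝ) (hX : ∀ k α, X k α = φ (angleDouble^[k] α)) :
    ∀ i j : ℕ, (r : ℤ) ≤ |(i : ℤ) - (j : ℤ)| → IndepFun (X i) (X j) unifP := by
  have h2r : (0:ℝ) < 2 ^ r := by positivity
  -- step function description
  have hstep' : ∀ y ∈ Set.Ico (0:ℝ) 1, φ y = φ (((⌊(2 ^ r : ℝ) * y⌋ : ℤ) : ℝ) / 2 ^ r) := by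
    intro y hy
    have hnn : (0:ℝ) ≤ (2 ^ r : ℝ) * y := by
      have := hy.1; positivity
    have hf0 : 0 ≤ ⌊(2 ^ r : ℝ) * y⌋ := Int.floor_nonneg.2 hnn
    have hfN : ⌊(2 ^ r : ℝ) * y⌋ < (2 ^ r : ℤ) := by
      apply Int.floor_lt.2
      push_cast
      nlinarith [hy.2]
    have hlt : ⌊(2 ^ r : ℝ) * y⌋.toNat < 2 ^ r := by
      have hc : ((2 ^ r : ℕ) : ℤ) = (2 ^ r : ℤ) := by push_cast; ring
      omega
    have hcast : ((⌊(2 ^ r : ℝ) * y⌋.toNat : ℕ) : ℝ) = ((⌊(2 ^ r : ℝ) * y⌋ : ℤ) : ℝ) := by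
      exact_mod_cast congrArg (fun z : ℤ => (z : ℝ)) (Int.toNat_of_nonneg hf0)
    have := hstep ⌊(2 ^ r : ℝ) * y⌋.toNat hlt y ?mem
    · rw [this, hcast]
    case mem =>
      rw [Set.mem_Ico, hcast]
      constructor
      · rw [div_le_iff₀ h2r]
        have := Int.floor_le ((2 ^ r : ℝ) * y)
        linarith
      · rw [lt_div_iff₀ h2r]
        have := Int.lt_floor_add_one ((2 ^ r : ℝ) * y)
        linarith
  -- iterates as fract of powers
  have hiter : ∀ k : ℕ, ∀ α ∈ Set.Ico (0:ℝ) 1, angleDouble^[k] α = Int.fract ((2 ^ k : ℝ) * α) := by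
    intro k
    induction k with
    | zero =>
      intro α hα
      simp [Int.fract_eq_self.2 ⟨hα.1, hα.2⟩]
    | succ n ih =>
      intro α hα
      rw [Function.iterate_succ_apply', ih α hα, angleDouble]
      have h1 : 2 * Int.fract ((2 ^ n : ℝ) * α)
          = (2 ^ (n+1) : ℝ) * α - ((2 * ⌊(2 ^ n : ℝ) * α⌋ : ℤ) : ℝ) := by
        rw [Int.fract]
        push_cast
        ring
      rw [h1, Int.fract_sub_intCast]
  -- the digit random variables
  set Y : ℕ → ℝ → ℤ := fun k α => ⌊(2 ^ (k + r) : ℝ) * α⌋ % (2 ^ r : ℤ) with hYdef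
  set g : ℤ → ℝ := fun n => φ ((n : ℝ) / 2 ^ r) with hgdef
  have hXY : ∀ k : ℕ, ∀ α ∈ Set.Ico (0:ℝ) 1, X k α = g (Y k α) := by
    intro k α hα
    rw [hX, hiter k α hα]
    have hfr : Int.fract ((2 ^ k : ℝ) * α) ∈ Set.Ico (0:ℝ) 1 :=
      ⟨Int.fract_nonneg _, Int.fract_lt_one _⟩
    rw [hstep' _ hfr]
    have hfloor : ⌊(2 ^ r : ℝ) * Int.fract ((2 ^ k : ℝ) * α)⌋ = Y k α := by
      have h1 : (2 ^ r : ℝ) * Int.fract ((2 ^ k : ℝ) * α)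
          = (2 ^ (k + r) : ℝ) * α - ((2 ^ r * ⌊(2 ^ k : ℝ) * α⌋ : ℤ) : ℝ) := by
        rw [Int.fract]
        push_cast
        rw [pow_add]
        ring
      have h2 : ⌊(2 ^ r : ℝ) * Int.fract ((2 ^ k : ℝ) * α)⌋
          = ⌊(2 ^ (k + r) : ℝ) * α⌋ - 2 ^ r * ⌊(2 ^ k : ℝ) * α⌋ := by
        rw [h1, Int.floor_sub_intCast]
      have h0 : 0 ≤ ⌊(2 ^ r : ℝ) * Int.fract ((2 ^ k : ℝ) * α)⌋ :=
        Int.floor_nonneg.2 (mul_nonneg (by positivity) (Int.fract_nonneg _))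
      have hlt2 : ⌊(2 ^ r : ℝ) * Int.fract ((2 ^ k : ℝ) * α)⌋ < 2 ^ r := by
        apply Int.floor_lt.2
        push_cast
        nlinarith [Int.fract_lt_one ((2 ^ k : ℝ) * α), Int.fract_nonneg ((2 ^ k : ℝ) * α)]
      have h3 : ⌊(2 ^ (k + r) : ℝ) * α⌋
          = ⌊(2 ^ r : ℝ) * Int.fract ((2 ^ k : ℝ) * α)⌋ + 2 ^ r * ⌊(2 ^ k : ℝ) * α⌋ := by
        omega
      rw [hYdef]
      simp only
      rw [h3, Int.add_mul_emod_self_left, Int.emod_eq_of_lt h0 hlt2]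
    rw [hfloor]
  have hYrange : ∀ (k : ℕ) (α : ℝ), 0 ≤ Y k α ∧ Y k α < 2 ^ r := by
    intro k α
    constructor
    · exact Int.emod_nonneg _ (pow_ne_zero r two_ne_zero)
    · exact Int.emod_lt_of_pos _ (pow_pos (by norm_num) r)
  have hYmeas : ∀ k : ℕ, Measurable (Y k) := by
    intro k
    have h1 : Measurable fun α : ℝ => ⌊(2 ^ (k + r) : ℝ) * α⌋ :=
      (measurable_id.const_mul _).floor
    exact (measurable_from_top (f := fun n : ℤ => n % (2 ^ r : ℤ))).comp h1
  have hae : ∀ k : ℕ, (fun α => g (Y k α)) =ᵐ[unifP] X k := by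
    intro k
    have hmem : ∀ᵐ α ∂unifP, α ∈ Set.Ico (0:ℝ) 1 := by
      rw [ae_iff]
      rw [unifP, Measure.restrict_apply' measurableSet_Icc]
      apply measure_mono_null (t := {(1:ℝ)}) ?_ Real.volume_singleton
      intro α hα
      simp only [Set.mem_inter_iff, Set.mem_setOf_eq, Set.mem_Ico, Set.mem_Icc] at hα
      have := hα.1
      have h2 := hα.2
      simp only [Set.mem_singleton_iff]
      by_contra hne
      exact this ⟨h2.1, lt_of_le_of_ne h2.2 hne⟩
    filter_upwards [hmem] with α hα
    exact (hXY k α hα).symm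
  -- key case
  have key : ∀ i j : ℕ, i + r ≤ j → IndepFun (X i) (X j) unifP := by
    intro i j hij
    obtain ⟨t, rfl⟩ : ∃ t, j = i + r + t := ⟨j - (i + r), by omega⟩
    have hYind : IndepFun (Y i) (Y (i + r + t)) unifP := by
      rw [indepFun_iff_map_prod_eq_prod_map_map (hYmeas i).aemeasurable
        (hYmeas (i + r + t)).aemeasurable]
      haveI h1 : IsProbabilityMeasure (unifP.map (Y i)) :=
        Measure.isProbabilityMeasure_map (hYmeas i).aemeasurable
      haveI h2 : IsProbabilityMeasure (unifP.map (Y (i + r + t))) :=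
        Measure.isProbabilityMeasure_map (hYmeas (i + r + t)).aemeasurable
      apply MeasureTheory.Measure.ext_of_singleton
      rintro ⟨a, b⟩
      rw [Measure.map_apply ((hYmeas i).prodMk (hYmeas (i + r + t)))
        (measurableSet_singleton _)]
      rw [show ({((a : ℤ), (b : ℤ))} : Set (ℤ × ℤ)) = {a} ×ˢ {b} by
        rw [Set.singleton_prod_singleton]]
      rw [Measure.prod_prod, Measure.map_apply (hYmeas i) (measurableSet_singleton _),
        Measure.map_apply (hYmeas (i + r + t)) (measurableSet_singleton _)]
      have hpre : (fun α => (Y i α, Y (i + r + t) α)) ⁻¹' ({a} ×ˢ {b})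
          = Y i ⁻¹' {a} ∩ Y (i + r + t) ⁻¹' {b} := by
        ext α
        simp [Set.mem_prod]
      rw [hpre]
      by_cases ha : 0 ≤ a ∧ a < (2 ^ r : ℤ)
      · by_cases hb : 0 ≤ b ∧ b < (2 ^ r : ℤ)
        · -- main computation
          have hcast2r : ((2 ^ r : ℕ) : ℤ) = (2 ^ r : ℤ) := by push_cast; ring
          have hatoNat : a.toNat < 2 ^ r := by omega
          have hbtoNat : b.toNat < 2 ^ r := by omega
          have hma : unifP (Y i ⁻¹' {a})
              = ((2 ^ i : ℕ) : ENNReal) / (2 ^ (i + r) : ENNReal) := by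
            have hset : Y i ⁻¹' {a}
                = {α : ℝ | (fun n : ℤ => n % (2 ^ r : ℤ) = a) ⌊(2 ^ (i + r) : ℝ) * α⌋} := by
              ext α
              simp [hYdef]
            rw [hset, measB (i + r) (fun n : ℤ => n % (2 ^ r : ℤ) = a)]
            congr 1
            have hfc : (Finset.range (2 ^ (i + r))).filter
                  (fun m : ℕ => (m : ℤ) % (2 ^ r : ℤ) = a)
                = (Finset.range (2 ^ r * 2 ^ i)).filter (fun m : ℕ => m % 2 ^ r = a.toNat) := by
              rw [show 2 ^ (i + r) = 2 ^ r * 2 ^ i by rw [pow_add, mul_comm]]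
              apply Finset.filter_congr
              intro m _
              have hmm : ((m % 2 ^ r : ℕ) : ℤ) = (m : ℤ) % (2 ^ r : ℤ) := by push_cast; ring
              rw [← hmm]
              omega
            rw [hfc, countA _ _ _ hatoNat]
          have hmb : unifP (Y (i + r + t) ⁻¹' {b})
              = ((2 ^ (i + r + t) : ℕ) : ENNReal) / (2 ^ (i + 2 * r + t) : ENNReal) := by
            have hset : Y (i + r + t) ⁻¹' {b}
                = {α : ℝ | (fun n : ℤ => n % (2 ^ r : ℤ) = b) ⌊(2 ^ (i + 2 * r + t) : ℝ) * α⌋} := by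
              ext α
              simp only [hYdef, Set.mem_preimage, Set.mem_singleton_iff, Set.mem_setOf_eq]
              rw [show i + r + t + r = i + 2 * r + t by omega]
            rw [hset, measB (i + 2 * r + t) (fun n : ℤ => n % (2 ^ r : ℤ) = b)]
            congr 1
            have hfc : (Finset.range (2 ^ (i + 2 * r + t))).filter
                  (fun m : ℕ => (m : ℤ) % (2 ^ r : ℤ) = b)
                = (Finset.range (2 ^ r * 2 ^ (i + r + t))).filter
                    (fun m : ℕ => m % 2 ^ r = b.toNat) := by
              rw [show 2 ^ (i + 2 * r + t) = 2 ^ r * 2 ^ (i + r + t) by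
                rw [← pow_add]; congr 1; omega]
              apply Finset.filter_congr
              intro m _
              have hmm : ((m % 2 ^ r : ℕ) : ℤ) = (m : ℤ) % (2 ^ r : ℤ) := by push_cast; ring
              rw [← hmm]
              omega
            rw [hfc, countA _ _ _ hbtoNat]
          have hmj : unifP (Y i ⁻¹' {a} ∩ Y (i + r + t) ⁻¹' {b})
              = ((2 ^ i * 2 ^ t : ℕ) : ENNReal) / (2 ^ (i + 2 * r + t) : ENNReal) := by
            have hset : Y i ⁻¹' {a} ∩ Y (i + r + t) ⁻¹' {b}
                = {α : ℝ | (fun n : ℤ => (n / (2 ^ (r + t) : ℤ)) % (2 ^ r : ℤ) = a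
                    ∧ n % (2 ^ r : ℤ) = b) ⌊(2 ^ (i + 2 * r + t) : ℝ) * α⌋} := by
              ext α
              simp only [hYdef, Set.mem_inter_iff, Set.mem_preimage, Set.mem_singleton_iff,
                Set.mem_setOf_eq]
              rw [show i + r + t + r = i + 2 * r + t by omega, fl_div i r t α]
            rw [hset, measB (i + 2 * r + t)
              (fun n : ℤ => (n / (2 ^ (r + t) : ℤ)) % (2 ^ r : ℤ) = a ∧ n % (2 ^ r : ℤ) = b)]
            congr 1
            have hfc : (Finset.range (2 ^ (i + 2 * r + t))).filter
                  (fun m : ℕ => ((m : ℤ) / (2 ^ (r + t) : ℤ)) % (2 ^ r : ℤ) = a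
                    ∧ (m : ℤ) % (2 ^ r : ℤ) = b)
                = (Finset.range (2 ^ (r + t) * 2 ^ (i + r))).filter
                    (fun m : ℕ => m / 2 ^ (r + t) % 2 ^ r = a.toNat
                      ∧ m % 2 ^ r = b.toNat) := by
              rw [show 2 ^ (i + 2 * r + t) = 2 ^ (r + t) * 2 ^ (i + r) by
                rw [← pow_add]; congr 1; omega]
              apply Finset.filter_congr
              intro m _
              have hmm1 : ((m / 2 ^ (r + t) % 2 ^ r : ℕ) : ℤ)
                  = ((m : ℤ) / (2 ^ (r + t) : ℤ)) % (2 ^ r : ℤ) := by push_cast; ring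
              have hmm2 : ((m % 2 ^ r : ℕ) : ℤ) = (m : ℤ) % (2 ^ r : ℤ) := by push_cast; ring
              rw [← hmm1, ← hmm2]
              omega
            rw [hfc, countB _ _ _ _ _ (by positivity) (pow_dvd_pow 2 (by omega))]
            have hc1 : ((Finset.range (2 ^ (i + r))).filter
                (fun m : ℕ => m % 2 ^ r = a.toNat)).card = 2 ^ i := by
              rw [show 2 ^ (i + r) = 2 ^ r * 2 ^ i by rw [pow_add, mul_comm]]
              exact countA _ _ _ hatoNat
            have hc2 : ((Finset.range (2 ^ (r + t))).filter
                (fun m : ℕ => m % 2 ^ r = b.toNat)).card = 2 ^ t := by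
              rw [show 2 ^ (r + t) = 2 ^ r * 2 ^ t by rw [pow_add]]
              exact countA _ _ _ hbtoNat
            rw [hc1, hc2]
          rw [hmj, hma, hmb]
          have hne1 : ((2 ^ i * 2 ^ t : ℕ) : ENNReal) / (2 ^ (i + 2 * r + t) : ENNReal) ≠ ⊤ :=
            (ENNReal.div_lt_top (ENNReal.natCast_ne_top _) (by positivity)).ne
          have hd1 : ((2 ^ i : ℕ) : ENNReal) / (2 ^ (i + r) : ENNReal) ≠ ⊤ :=
            (ENNReal.div_lt_top (ENNReal.natCast_ne_top _) (by positivity)).ne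
          have hd2 : ((2 ^ (i + r + t) : ℕ) : ENNReal) / (2 ^ (i + 2 * r + t) : ENNReal) ≠ ⊤ :=
            (ENNReal.div_lt_top (ENNReal.natCast_ne_top _) (by positivity)).ne
          have hne2 : ((2 ^ i : ℕ) : ENNReal) / (2 ^ (i + r) : ENNReal)
              * (((2 ^ (i + r + t) : ℕ) : ENNReal) / (2 ^ (i + 2 * r + t) : ENNReal)) ≠ ⊤ :=
            ENNReal.mul_ne_top hd1 hd2
          rw [← ENNReal.toReal_eq_toReal_iff' hne1 hne2]
          rw [ENNReal.toReal_mul, ENNReal.toReal_div, ENNReal.toReal_div, ENNReal.toReal_div]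
          simp only [ENNReal.toReal_pow, ENNReal.toReal_ofNat, ENNReal.toReal_natCast]
          push_cast
          rw [div_mul_div_comm]
          rw [div_eq_div_iff (by positivity) (by positivity)]
          simp only [pow_add]
          ring
        · have hE : Y (i + r + t) ⁻¹' {b} = ∅ := by
            ext α
            simp only [Set.mem_preimage, Set.mem_singleton_iff, Set.mem_empty_iff_false,
              iff_false]
            intro h
            exact hb (h ▸ hYrange (i + r + t) α)
          rw [hE, Set.inter_empty]
          simp
      · have hE : Y i ⁻¹' {a} = ∅ := by
          ext α
          simp only [Set.mem_preimage, Set.mem_singleton_iff, Set.mem_empty_iff_false,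
            iff_false]
          intro h
          exact ha (h ▸ hYrange i α)
        rw [hE, Set.empty_inter]
        simp
    have hg : Measurable g := measurable_from_top
    exact ((hYind.comp hg hg).congr (hae i) (hae (i + r + t)))
  -- symmetry reduction
  intro i j hij
  rcases le_total i j with h | h
  · have h1 : (r : ℤ) ≤ (j : ℤ) - (i : ℤ) := by
      rwa [abs_of_nonpos (by omega), neg_sub] at hij
    exact key i j (by omega)
  · have h1 : (r : ℤ) ≤ (i : ℤ) - (j : ℤ) := by
      rwa [abs_of_nonneg (by omega)] at hij
    exact (key j i (by omega)).symm
end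

section
/- Let r ≥ 1 and let φ : [0,1] → ℝ be a step function that is constant on each dyadic interval [i/2^r, (i+1)/2^r) for i = 0, …, 2^r − 1, with ∫₀¹ φ(t) dt = 0. Set X_k^φ(α) = φ(T^k α) on the probability space [0,1] with Lebesgue measure, where T is the angle-doubling map, and let σ_n² = Var(X_0^φ + ⋯ + X_{n−1}^φ). Then lim_{n→∞} σ_n²/n = ∫₀¹ φ(t)² dt + 2 ∑_{k=1}^{r−1} Cov(X_0^φ, X_k^φ). -/
open MeasureTheory ProbabilityTheory Filter

/-- Covariance of two real random variables on `([0,1], Leb)`. -/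
noncomputable def covP (X Y : ℝ → ℝ) : ℝ :=
  (∫ α, X α * Y α ∂unifP) - (∫ α, X α ∂unifP) * ∫ α, Y α ∂unifP

namespace StepVarAux

instance : IsProbabilityMeasure unifP :=
  ⟨by simp [unifP, Measure.restrict_apply_univ, Real.volume_Icc]⟩

lemma ae_mem_Ico01 : ∀ᵐ x ∂unifP, x ∈ Set.Ico (0:ℝ) 1 := by
  rw [unifP, Measure.restrict_congr_set (MeasureTheory.Ico_ae_eq_Icc).symm]
  exact ae_restrict_mem measurableSet_Ico

lemma unifP_eq_interval (g : ℝ → ℝ) :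
    ∫ x, g x ∂unifP = ∫ t in (0:ℝ)..1, g t := by
  rw [intervalIntegral.integral_of_le zero_le_one, unifP,
    Measure.restrict_congr_set (MeasureTheory.Ioc_ae_eq_Icc).symm]

lemma sum_range_mul_mod (g : ℕ → ℝ) (t K : ℕ) :
    ∑ i ∈ Finset.range (t * K), g (i % K) = (t : ℝ) * ∑ s ∈ Finset.range K, g s := by
  induction t with
  | zero => simp
  | succ t ih =>
    rw [Nat.succ_mul, Finset.sum_range_add, ih]
    have h : ∀ s ∈ Finset.range K, g ((t * K + s) % K) = g s := by
      intro s hs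
      rw [add_comm, Nat.add_mul_mod_self_right, Nat.mod_eq_of_lt (Finset.mem_range.1 hs)]
    rw [Finset.sum_congr rfl h]
    push_cast; ring

lemma sum_range_mul_blocks (g : ℕ → ℝ) (t K : ℕ) :
    ∑ i ∈ Finset.range (t * K), g i
      = ∑ q ∈ Finset.range t, ∑ s ∈ Finset.range K, g (q * K + s) := by
  induction t with
  | zero => simp
  | succ t ih =>
    rw [Nat.succ_mul, Finset.sum_range_add, ih, Finset.sum_range_succ]

lemma mem_dyadic_iff (M i : ℕ) {x : ℝ} (hx : 0 ≤ x) :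
    x ∈ Set.Ico ((i : ℝ) / 2 ^ M) (((i : ℝ) + 1) / 2 ^ M) ↔ ⌊(2:ℝ) ^ M * x⌋₊ = i := by
  have hM : (0:ℝ) < 2 ^ M := by positivity
  rw [Set.mem_Ico, Nat.floor_eq_iff (by positivity), div_le_iff₀ hM, lt_div_iff₀ hM]
  constructor
  · rintro ⟨h1, h2⟩
    exact ⟨by nlinarith, by nlinarith⟩
  · rintro ⟨h1, h2⟩
    exact ⟨by nlinarith, by nlinarith⟩

lemma iterate_angleDouble (k : ℕ) {x : ℝ} (hx : x ∈ Set.Ico (0:ℝ) 1) :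
    angleDouble^[k] x = Int.fract ((2:ℝ) ^ k * x) := by
  induction k with
  | zero => simp [Int.fract_eq_self.2 ⟨hx.1, hx.2⟩]
  | succ k ih =>
    rw [Function.iterate_succ_apply', ih, angleDouble]
    have h : (2:ℝ) * Int.fract ((2:ℝ) ^ k * x)
        = (2:ℝ) ^ (k+1) * x - ((2 * ⌊(2:ℝ) ^ k * x⌋ : ℤ) : ℝ) := by
      rw [← Int.self_sub_floor]
      push_cast
      ring
    rw [h, Int.fract_sub_intCast]

lemma floor_fract_digit (R k : ℕ) {x : ℝ} (hx : 0 ≤ x) :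
    ⌊(2:ℝ) ^ R * Int.fract ((2:ℝ) ^ k * x)⌋₊ = ⌊(2:ℝ) ^ (k + R) * x⌋₊ % 2 ^ R := by
  set z : ℝ := (2:ℝ) ^ (k + R) * x with hz
  have hz0 : 0 ≤ z := by positivity
  set u : ℕ := ⌊z⌋₊ with hu
  set N : ℕ := ⌊(2:ℝ) ^ k * x⌋₊ with hN
  have hkx : 0 ≤ (2:ℝ) ^ k * x := by positivity
  have hNu : N = u / 2 ^ R := by
    have hdiv : (2:ℝ) ^ k * x = z / ((2 ^ R : ℕ) : ℝ) := by
      rw [hz, pow_add]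
      push_cast
      field_simp
    rw [hN, hdiv, Nat.floor_div_natCast, ← hu]
  have hfr : 0 ≤ (2:ℝ) ^ R * Int.fract ((2:ℝ) ^ k * x) := by
    have := Int.fract_nonneg ((2:ℝ) ^ k * x)
    positivity
  have h1 : (2:ℝ) ^ R * Int.fract ((2:ℝ) ^ k * x) = z - ((2 ^ R * N : ℕ) : ℝ) := by
    rw [← Int.self_sub_floor, hz, pow_add]
    have hc : ((N : ℕ) : ℝ) = ((⌊(2:ℝ) ^ k * x⌋ : ℤ) : ℝ) := by
      rw [hN, natCast_floor_eq_intCast_floor hkx]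
    push_cast [hc]
    ring
  have hint : (⌊(2:ℝ) ^ R * Int.fract ((2:ℝ) ^ k * x)⌋₊ : ℤ)
      = (u : ℤ) - ((2 ^ R * N : ℕ) : ℤ) := by
    rw [Int.natCast_floor_eq_floor hfr, h1, Int.floor_sub_natCast, Int.natCast_floor_eq_floor hz0]
  have hle : 2 ^ R * N ≤ u := by
    rw [hNu]
    exact Nat.mul_div_le u (2 ^ R)
  have hA : ⌊(2:ℝ) ^ R * Int.fract ((2:ℝ) ^ k * x)⌋₊ = u - 2 ^ R * N := by
    have : ((u - 2 ^ R * N : ℕ) : ℤ) = (u : ℤ) - ((2 ^ R * N : ℕ) : ℤ) :=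
      Int.ofNat_sub hle
    exact_mod_cast hint.trans this.symm
  rw [hA, hNu]
  exact Nat.sub_eq_of_eq_add (Nat.mod_add_div u (2 ^ R)).symm

lemma eval_indicator_sum (M : ℕ) (c : ℕ → ℝ) {x : ℝ} (hx : x ∈ Set.Ico (0:ℝ) 1) :
    ∑ i ∈ Finset.range (2 ^ M),
        Set.indicator (Set.Ico ((i : ℝ) / 2 ^ M) (((i : ℝ) + 1) / 2 ^ M)) (fun _ => c i) x
      = c ⌊(2:ℝ) ^ M * x⌋₊ := by
  set i₀ : ℕ := ⌊(2:ℝ) ^ M * x⌋₊ with hi₀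
  have hi₀lt : i₀ < 2 ^ M := by
    rw [hi₀]
    rw [Nat.floor_lt (mul_nonneg (by positivity) hx.1)]
    have h1 : (2:ℝ) ^ M * x < 2 ^ M * 1 := by
      have := hx.2
      have h2 : (0:ℝ) < 2 ^ M := by positivity
      nlinarith
    simpa using h1
  rw [Finset.sum_eq_single i₀]
  · exact Set.indicator_of_mem ((mem_dyadic_iff M i₀ hx.1).2 hi₀.symm) _
  · intro j _ hj
    apply Set.indicator_of_notMem
    intro hmem
    exact hj (((mem_dyadic_iff M j hx.1).1 hmem).symm.trans hi₀.symm)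
  · intro h
    exact absurd (Finset.mem_range.2 hi₀lt) h

lemma unifP_integral_step (M : ℕ) (G : ℝ → ℝ) (g : ℕ → ℝ)
    (hg : ∀ x ∈ Set.Ico (0:ℝ) 1, G x = g ⌊(2:ℝ) ^ M * x⌋₊) :
    ∫ x, G x ∂unifP = (∑ i ∈ Finset.range (2 ^ M), g i) / 2 ^ M := by
  set s : ℝ → ℝ := fun x => ∑ i ∈ Finset.range (2 ^ M),
    Set.indicator (Set.Ico ((i : ℝ) / 2 ^ M) (((i : ℝ) + 1) / 2 ^ M)) (fun _ => g i) x with hs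
  have hGs : G =ᵐ[unifP] s := by
    filter_upwards [ae_mem_Ico01] with x hx
    rw [hg x hx, hs]
    exact (eval_indicator_sum M g hx).symm
  rw [integral_congr_ae hGs, hs]
  have hint : ∀ i ∈ Finset.range (2 ^ M),
      Integrable ((Set.Ico ((i : ℝ) / 2 ^ M) (((i : ℝ) + 1) / 2 ^ M)).indicator
        (fun _ => g i)) unifP := by
    intro i _
    exact (integrable_indicator_iff measurableSet_Ico).2
      (integrableOn_const (measure_ne_top _ _))
  rw [integral_finset_sum _ hint]
  have hval : ∀ i ∈ Finset.range (2 ^ M),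
      ∫ x, Set.indicator (Set.Ico ((i : ℝ) / 2 ^ M) (((i : ℝ) + 1) / 2 ^ M))
          (fun _ => g i) x ∂unifP = g i / 2 ^ M := by
    intro i hi
    rw [integral_indicator_const _ measurableSet_Ico]
    have hsub : Set.Ico ((i : ℝ) / 2 ^ M) (((i : ℝ) + 1) / 2 ^ M) ⊆ Set.Icc (0:ℝ) 1 := by
      intro y hy
      have hM : (0:ℝ) < 2 ^ M := by positivity
      have hi' : ((i : ℝ) + 1) ≤ 2 ^ M := by
        have := Finset.mem_range.1 hi
        have : ((i : ℝ) + 1) ≤ ((2 ^ M : ℕ) : ℝ) := by exact_mod_cast this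
        simpa using this
      constructor
      · exact le_trans (by positivity) hy.1
      · exact le_trans hy.2.le (by rw [div_le_one hM]; exact hi')
    have hμ : unifP (Set.Ico ((i : ℝ) / 2 ^ M) (((i : ℝ) + 1) / 2 ^ M))
        = ENNReal.ofReal (1 / 2 ^ M) := by
      rw [unifP, Measure.restrict_apply measurableSet_Ico,
        Set.inter_eq_left.2 hsub, Real.volume_Ico]
      congr 1
      ring
    rw [measureReal_def, hμ, ENNReal.toReal_ofReal (by positivity), smul_eq_mul]
    ring
  rw [Finset.sum_congr rfl hval, ← Finset.sum_div]

lemma sum_sum_dist (S : ℕ → ℝ) (n : ℕ) :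
    ∑ j ∈ Finset.range n, ∑ k ∈ Finset.range n, S (max j k - min j k)
      = n * S 0 + 2 * ∑ j ∈ Finset.range n, ((n : ℝ) - (j + 1)) * S (j + 1) := by
  induction n with
  | zero => simp
  | succ n ih =>
    have h1 : ∑ j ∈ Finset.range (n+1), ∑ k ∈ Finset.range (n+1), S (max j k - min j k)
        = (∑ j ∈ Finset.range n, ∑ k ∈ Finset.range n, S (max j k - min j k))
          + 2 * (∑ j ∈ Finset.range n, S (n - j)) + S 0 := by
      rw [Finset.sum_range_succ]
      have h2 : ∀ j ∈ Finset.range n, ∑ k ∈ Finset.range (n+1), S (max j k - min j k)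
          = (∑ k ∈ Finset.range n, S (max j k - min j k)) + S (n - j) := by
        intro j hj
        rw [Finset.sum_range_succ]
        have hj' := Finset.mem_range.1 hj
        rw [show max j n - min j n = n - j by omega]
      rw [Finset.sum_congr rfl h2, Finset.sum_add_distrib]
      have h3 : ∑ k ∈ Finset.range (n+1), S (max n k - min n k)
          = (∑ k ∈ Finset.range n, S (n - k)) + S 0 := by
        rw [Finset.sum_range_succ, show max n n - min n n = 0 by omega]
        congr 1
        exact Finset.sum_congr rfl fun k hk => by
          have := Finset.mem_range.1 hk
          rw [show max n k - min n k = n - k by omega]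
      rw [h3]
      ring
    have h5 : ∑ j ∈ Finset.range n, S (n - j) = ∑ j ∈ Finset.range n, S (j + 1) := by
      conv_rhs => rw [← Finset.sum_range_reflect]
      exact Finset.sum_congr rfl fun j hj => by
        have := Finset.mem_range.1 hj
        rw [show n - 1 - j + 1 = n - j by omega]
    rw [h1, ih, h5, Finset.sum_range_succ]
    have h6 : ∀ j ∈ Finset.range n, (((n:ℝ) + 1) - ((j:ℝ) + 1)) * S (j + 1)
        = ((n:ℝ) - ((j:ℝ) + 1)) * S (j + 1) + S (j + 1) := fun j _ => by ring
    push_cast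
    rw [Finset.sum_congr rfl h6, Finset.sum_add_distrib]
    ring

end StepVarAux

open StepVarAux

theorem step_variance_limit
    (r : ℕ) (hr : 1 ≤ r) (φ : ℝ → ℝ)
    (hstep : ∀ i : ℕ, i < 2 ^ r →
      ∀ x ∈ Set.Ico ((i : ℝ) / 2 ^ r) (((i : ℝ) + 1) / 2 ^ r), φ x = φ ((i : ℝ) / 2 ^ r))
    (hzero : (∫ t in (0 : ℝ)..1, φ t) = 0)
    (X : ℕ → ℝ → ℝ) (hX : ∀ k α, X k α = φ (angleDouble^[k] α))
    (σnsq : ℕ → ℝ)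
    (hσnsq : ∀ n, σnsq n = variance (fun α => ∑ k ∈ Finset.range n, X k α) unifP) :
    Tendsto (fun n : ℕ => σnsq n / n) atTop
      (nhds ((∫ t in (0 : ℝ)..1, φ t ^ 2)
        + 2 * ∑ k ∈ Finset.Icc 1 (r - 1), covP (X 0) (X k))) := by
  classical
  set a : ℕ → ℝ := fun i => φ ((i : ℝ) / 2 ^ r) with ha
  -- pointwise description of X k on [0,1)
  have hXval : ∀ k : ℕ, ∀ x ∈ Set.Ico (0:ℝ) 1,
      X k x = a (⌊(2:ℝ) ^ (k + r) * x⌋₊ % 2 ^ r) := by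
    intro k x hx
    rw [hX, iterate_angleDouble k hx]
    set y : ℝ := Int.fract ((2:ℝ) ^ k * x) with hy
    have hy01 : y ∈ Set.Ico (0:ℝ) 1 := ⟨Int.fract_nonneg _, Int.fract_lt_one _⟩
    have hflt : ⌊(2:ℝ) ^ r * y⌋₊ < 2 ^ r := by
      rw [Nat.floor_lt (mul_nonneg (by positivity) hy01.1)]
      have h2 : (0:ℝ) < 2 ^ r := by positivity
      have := hy01.2
      calc (2:ℝ) ^ r * y < 2 ^ r * 1 := by nlinarith
        _ = ((2 ^ r : ℕ) : ℝ) := by push_cast; ring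
    have hmem : y ∈ Set.Ico ((⌊(2:ℝ) ^ r * y⌋₊ : ℝ) / 2 ^ r)
        (((⌊(2:ℝ) ^ r * y⌋₊ : ℝ) + 1) / 2 ^ r) :=
      (mem_dyadic_iff r _ hy01.1).2 rfl
    have hdig : ⌊(2:ℝ) ^ r * y⌋₊ = ⌊(2:ℝ) ^ (k + r) * x⌋₊ % 2 ^ r := by
      rw [hy]; exact floor_fract_digit r k hx.1
    rw [hstep _ hflt y hmem]
    show a ⌊(2:ℝ) ^ r * y⌋₊ = a (⌊(2:ℝ) ^ (k + r) * x⌋₊ % 2 ^ r)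
    rw [hdig]
  -- sum of the a's over one period vanishes
  have hXzero : X 0 = fun x => φ x := by
    funext x; rw [hX]; simp
  have hsuma : ∑ i ∈ Finset.range (2 ^ r), a i = 0 := by
    have h1 : ∫ x, φ x ∂unifP = (∑ i ∈ Finset.range (2 ^ r), a (i % 2 ^ r)) / 2 ^ r := by
      apply unifP_integral_step r _ (fun i => a (i % 2 ^ r))
      intro x hx
      have := hXval 0 x hx
      rw [hXzero] at this
      simpa using this
    rw [unifP_eq_interval, hzero] at h1
    have h2 : ∑ i ∈ Finset.range (2 ^ r), a (i % 2 ^ r) = ∑ i ∈ Finset.range (2 ^ r), a i :=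
      Finset.sum_congr rfl fun i hi => by rw [Nat.mod_eq_of_lt (Finset.mem_range.1 hi)]
    have h3 : (0:ℝ) < 2 ^ r := by positivity
    rw [← h2]
    rcases div_eq_zero_iff.1 h1.symm with h | h
    · exact h
    · exact absurd h (by positivity)
  -- the correlation sums
  set S : ℕ → ℝ := fun m =>
    (∑ i ∈ Finset.range (2 ^ (m + r)), a ((i / 2 ^ m) % 2 ^ r) * a (i % 2 ^ r)) / 2 ^ (m + r)
    with hS
  -- means vanish
  have hmean : ∀ k, ∫ x, X k x ∂unifP = 0 := by
    intro k
    have h1 : ∫ x, X k x ∂unifP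
        = (∑ i ∈ Finset.range (2 ^ (k + r)), a (i % 2 ^ r)) / 2 ^ (k + r) :=
      unifP_integral_step (k + r) _ (fun i => a (i % 2 ^ r)) (hXval k)
    rw [h1]
    have h2 : (2:ℕ) ^ (k + r) = 2 ^ k * 2 ^ r := by rw [pow_add]
    rw [h2, sum_range_mul_mod a (2 ^ k) (2 ^ r), hsuma]
    simp
  -- products
  have hprod : ∀ j k : ℕ, j ≤ k → (∫ x, X j x * X k x ∂unifP) = S (k - j) := by
    intro j k hjk
    set m := k - j with hm
    have hcalc : ∫ x, X j x * X k x ∂unifP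
        = (∑ i ∈ Finset.range (2 ^ (k + r)),
            a ((i / 2 ^ m) % 2 ^ r) * a (i % 2 ^ r)) / 2 ^ (k + r) := by
      apply unifP_integral_step (k + r) _ (fun i => a ((i / 2 ^ m) % 2 ^ r) * a (i % 2 ^ r))
      intro x hx
      rw [hXval j x hx, hXval k x hx]
      have hpow : (2:ℝ) ^ (j + r) * (2:ℝ) ^ m = (2:ℝ) ^ (k + r) := by
        rw [← pow_add]; congr 1; omega
      have h2 : (2:ℝ) ^ (j + r) * x = ((2:ℝ) ^ (k + r) * x) / ((2 ^ m : ℕ) : ℝ) := by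
        rw [eq_div_iff (by positivity)]
        push_cast
        rw [mul_comm ((2:ℝ) ^ (j+r)) x, mul_assoc, hpow]
        ring
      have h3 : ⌊(2:ℝ) ^ (j + r) * x⌋₊ = ⌊(2:ℝ) ^ (k + r) * x⌋₊ / 2 ^ m := by
        rw [h2, Nat.floor_div_natCast]
      rw [h3]
    rw [hcalc]
    have hsplit : (2:ℕ) ^ (k + r) = 2 ^ j * 2 ^ (m + r) := by
      rw [← pow_add]; congr 1; omega
    have hcongr : ∀ i ∈ Finset.range (2 ^ j * 2 ^ (m + r)),
        a ((i / 2 ^ m) % 2 ^ r) * a (i % 2 ^ r)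
          = (fun i => a ((i / 2 ^ m) % 2 ^ r) * a (i % 2 ^ r)) (i % 2 ^ (m + r)) := by
      intro i _
      simp only
      congr 2
      · rw [pow_add, Nat.mod_mul_right_div_self, Nat.mod_mod_of_dvd _ dvd_rfl]
      · rw [Nat.mod_mod_of_dvd _ (pow_dvd_pow 2 (by omega : r ≤ m + r))]
    rw [hsplit, Finset.sum_congr rfl hcongr,
      sum_range_mul_mod (fun i => a ((i / 2 ^ m) % 2 ^ r) * a (i % 2 ^ r)) (2 ^ j) (2 ^ (m + r))]
    rw [hS]
    have hpowR : ((2:ℝ) ^ (k + r)) = ((2 ^ j : ℕ) : ℝ) * 2 ^ (m + r) := by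
      push_cast
      rw [← pow_add]; congr 1; omega
    rw [hpowR, mul_div_mul_left _ _ (by positivity : ((2 ^ j : ℕ) : ℝ) ≠ 0)]
  -- S vanishes from r on
  have hSvanish : ∀ m, r ≤ m → S m = 0 := by
    intro m hm
    rw [hS]
    have hsplit : (2:ℕ) ^ (m + r) = 2 ^ r * 2 ^ m := by
      rw [← pow_add]; congr 1; omega
    simp only
    rw [hsplit, sum_range_mul_blocks]
    have hinner : ∀ q ∈ Finset.range (2 ^ r),
        ∑ s ∈ Finset.range (2 ^ m),
          a (((q * 2 ^ m + s) / 2 ^ m) % 2 ^ r) * a ((q * 2 ^ m + s) % 2 ^ r) = 0 := by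
      intro q hq
      have hterm : ∀ s ∈ Finset.range (2 ^ m),
          a (((q * 2 ^ m + s) / 2 ^ m) % 2 ^ r) * a ((q * 2 ^ m + s) % 2 ^ r)
            = a (q % 2 ^ r) * a (s % 2 ^ r) := by
        intro s hs
        have hslt := Finset.mem_range.1 hs
        have hdiv : (q * 2 ^ m + s) / 2 ^ m = q := by
          rw [add_comm, Nat.add_mul_div_right _ _ (by positivity : 0 < 2 ^ m),
            Nat.div_eq_of_lt hslt, zero_add]
        have hmod : (q * 2 ^ m + s) % 2 ^ r = s % 2 ^ r := by
          have hdvd : (2:ℕ) ^ r ∣ 2 ^ m := pow_dvd_pow 2 hm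
          rw [Nat.add_mod, Nat.mul_mod, (Nat.mod_eq_zero_of_dvd hdvd : 2 ^ m % 2 ^ r = 0)]
          simp [Nat.mod_mod_of_dvd]
        rw [hdiv, hmod]
      rw [Finset.sum_congr rfl hterm, ← Finset.mul_sum]
      have h2m : (2:ℕ) ^ m = 2 ^ (m - r) * 2 ^ r := by
        rw [← pow_add]; congr 1; omega
      rw [h2m, sum_range_mul_mod a (2 ^ (m - r)) (2 ^ r), hsuma, mul_zero, mul_zero]
    rw [Finset.sum_congr rfl hinner]
    simp
  -- integrability data
  set ψ : ℕ → ℝ → ℝ := fun k x => ∑ i ∈ Finset.range (2 ^ (k + r)),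
    Set.indicator (Set.Ico ((i : ℝ) / 2 ^ (k + r)) (((i : ℝ) + 1) / 2 ^ (k + r)))
      (fun _ => a (i % 2 ^ r)) x with hψ
  have hψmem : ∀ k, MemLp (ψ k) 2 unifP := by
    intro k
    apply memLp_finset_sum
    intro i _
    exact memLp_indicator_const 2 measurableSet_Ico _ (Or.inr (measure_ne_top _ _))
  have hae : ∀ k, X k =ᵐ[unifP] ψ k := by
    intro k
    filter_upwards [ae_mem_Ico01] with x hx
    rw [hXval k x hx, hψ]
    exact (eval_indicator_sum (k + r) (fun i => a (i % 2 ^ r)) hx).symm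
  have hXmem : ∀ k, MemLp (X k) 2 unifP := fun k => (hψmem k).ae_eq (hae k).symm
  have hXint : ∀ k, Integrable (X k) unifP := fun k => (hXmem k).integrable one_le_two
  have hXXint : ∀ j k, Integrable (fun α => X j α * X k α) unifP := by
    intro j k
    have hpqr : (1:ENNReal) / 1 = 1 / 2 + 1 / 2 := by
      rw [ENNReal.div_add_div_same, one_add_one_eq_two,
        ENNReal.div_self two_ne_zero ENNReal.ofNat_ne_top, div_one]
    have h : MemLp (X j • X k) 1 unifP := (hXmem k).smul (hXmem j)
    have h2 := memLp_one_iff_integrable.1 h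
    exact h2.congr (Filter.Eventually.of_forall fun x => rfl)
  -- variance expansion
  have hvar : ∀ n, σnsq n
      = ∑ j ∈ Finset.range n, ∑ k ∈ Finset.range n, ∫ x, X j x * X k x ∂unifP := by
    intro n
    rw [hσnsq]
    have hΨ : MemLp (fun α => ∑ k ∈ Finset.range n, X k α) 2 unifP :=
      memLp_finset_sum _ fun k _ => hXmem k
    have hmeansum : ∫ x, (∑ k ∈ Finset.range n, X k x) ∂unifP = 0 := by
      rw [integral_finset_sum _ fun k _ => hXint k]
      simp [hmean]
    have hsq : ∫ x, (∑ k ∈ Finset.range n, X k x) ^ 2 ∂unifP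
        = ∑ j ∈ Finset.range n, ∑ k ∈ Finset.range n, ∫ x, X j x * X k x ∂unifP := by
      have hpt : ∀ x, (∑ k ∈ Finset.range n, X k x) ^ 2
          = ∑ j ∈ Finset.range n, ∑ k ∈ Finset.range n, X j x * X k x := by
        intro x
        rw [sq, Finset.sum_mul_sum]
      rw [integral_congr_ae (Filter.EventuallyEq.of_eq (funext hpt))]
      rw [integral_finset_sum _ fun j _ => integrable_finset_sum _ fun k _ => hXXint j k]
      exact Finset.sum_congr rfl fun j _ =>
        integral_finset_sum _ fun k _ => hXXint j k
    rw [variance_eq_sub hΨ]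
    simp only [Pi.pow_apply]
    rw [hmeansum, hsq]
    ring
  -- identify each term
  have hprod' : ∀ j k : ℕ, (∫ x, X j x * X k x ∂unifP) = S (max j k - min j k) := by
    intro j k
    rcases le_total j k with h | h
    · rw [Nat.max_eq_right h, Nat.min_eq_left h]
      exact hprod j k h
    · rw [Nat.max_eq_left h, Nat.min_eq_right h]
      have hcomm : (fun x => X j x * X k x) = fun x => X k x * X j x :=
        funext fun x => mul_comm _ _
      rw [hcomm]
      exact hprod k j h
  -- closed form of σnsq
  set L : ℝ := S 0 + 2 * ∑ j ∈ Finset.range (r - 1), S (j + 1) with hL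
  set C : ℝ := -2 * ∑ j ∈ Finset.range (r - 1), ((j : ℝ) + 1) * S (j + 1) with hC
  have hkey : ∀ n : ℕ, r ≤ n → σnsq n = n * L + C := by
    intro n hn
    rw [hvar n]
    have h1 : ∑ j ∈ Finset.range n, ∑ k ∈ Finset.range n, ∫ x, X j x * X k x ∂unifP
        = ∑ j ∈ Finset.range n, ∑ k ∈ Finset.range n, S (max j k - min j k) :=
      Finset.sum_congr rfl fun j _ => Finset.sum_congr rfl fun k _ => hprod' j k
    rw [h1, sum_sum_dist]
    have htrunc : ∑ j ∈ Finset.range n, ((n : ℝ) - ((j:ℝ) + 1)) * S (j + 1)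
        = ∑ j ∈ Finset.range (r - 1), ((n : ℝ) - ((j:ℝ) + 1)) * S (j + 1) := by
      apply (Finset.sum_subset (Finset.range_subset_range.2 (by omega : r - 1 ≤ n)) _).symm
      intro j _ hj
      rw [Finset.mem_range, not_lt] at hj
      rw [hSvanish _ (by omega), mul_zero]
    rw [htrunc]
    have hexp : ∑ j ∈ Finset.range (r - 1), ((n : ℝ) - ((j:ℝ) + 1)) * S (j + 1)
        = (n : ℝ) * ∑ j ∈ Finset.range (r - 1), S (j + 1)
          - ∑ j ∈ Finset.range (r - 1), ((j:ℝ) + 1) * S (j + 1) := by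
      rw [Finset.mul_sum, ← Finset.sum_sub_distrib]
      exact Finset.sum_congr rfl fun j _ => by ring
    rw [hexp, hL, hC]
    ring
  -- identify the limit value
  have hS0 : (∫ t in (0 : ℝ)..1, φ t ^ 2) = S 0 := by
    rw [← unifP_eq_interval]
    have h1 : ∫ x, φ x ^ 2 ∂unifP
        = (∑ i ∈ Finset.range (2 ^ r), a (i % 2 ^ r) ^ 2) / 2 ^ r := by
      apply unifP_integral_step r _ (fun i => a (i % 2 ^ r) ^ 2)
      intro x hx
      have h0 := hXval 0 x hx
      rw [hXzero, zero_add] at h0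
      simp only at h0
      rw [h0]
    rw [h1, hS]
    simp only [Nat.zero_add, pow_zero, Nat.div_one]
    congr 1
    exact Finset.sum_congr rfl fun i _ => by rw [sq]
  have hcov : ∀ k, covP (X 0) (X k) = S k := by
    intro k
    rw [covP, hprod 0 k (Nat.zero_le k), hmean, hmean, Nat.sub_zero, mul_zero, sub_zero]
  have hsum_eq : ∑ k ∈ Finset.Icc 1 (r - 1), covP (X 0) (X k)
      = ∑ j ∈ Finset.range (r - 1), S (j + 1) := by
    have hIcc : Finset.Icc 1 (r - 1) = Finset.Ico 1 r := by
      rw [← Finset.Ico_add_one_right_eq_Icc]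
      congr 1
      omega
    rw [hIcc, Finset.sum_Ico_eq_sum_range]
    apply Finset.sum_congr rfl
    intro j _
    rw [hcov, show 1 + j = j + 1 by omega]
  have hlimval : (∫ t in (0 : ℝ)..1, φ t ^ 2)
      + 2 * ∑ k ∈ Finset.Icc 1 (r - 1), covP (X 0) (X k) = L := by
    rw [hS0, hsum_eq, hL]
  rw [hlimval]
  -- final limit
  have hfinal : Tendsto (fun n : ℕ => L + C / n) atTop (nhds L) := by
    have := (tendsto_const_nhds (x := L) (f := atTop (α := ℕ))).add
      (tendsto_const_div_atTop_nhds_zero_nat C)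
    simpa using this
  apply Tendsto.congr' _ hfinal
  filter_upwards [eventually_ge_atTop (max r 1)] with n hn
  have hnr : r ≤ n := le_trans (le_max_left _ _) hn
  have hn1 : 1 ≤ n := le_trans (le_max_right _ _) hn
  have hne : (n : ℝ) ≠ 0 := by positivity
  rw [hkey n hnr]
  field_simp
end
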